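/- arXiv:2207.09246 — 4 statements merged into one kernel-verified Lean document; each statement's English description precedes it below -/
import Mathlib

section
/- Let F be a continuous c.d.f. with ∫₀¹ (F^{-1}(u))² du < ∞. Then ∫₀¹∫₀¹ [F^{-1}(u)/φ(Φ^{-1}(u))] · [Φ^{-1}(v)/φ(Φ^{-1}(v))] · (min(u,v) − uv) du dv = (1/2) ∫₀¹ F^{-1}(u) Φ^{-1}(u) du. -/
open MeasureTheory ProbabilityTheory

/-- Standard normal density. -/
noncomputable def stdphi (x : ℝ) : ℝ := gaussianPDFReal 0 1 x

/-- Standard normal c.d.f. -/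
noncomputable def stdPhi (x : ℝ) : ℝ := ∫ t in Set.Iic x, gaussianPDFReal 0 1 t

/-- Standard normal quantile function. -/
noncomputable def stdPhiInv (u : ℝ) : ℝ := sInf {x : ℝ | u ≤ stdPhi x}

section Aux

open Real Set Filter

lemma stdphi_eq (x : ℝ) : stdphi x = (Real.sqrt (2*Real.pi))⁻¹ * Real.exp (-(x^2/2)) := by
  simp only [stdphi, gaussianPDFReal]
  norm_num [neg_div]

lemma stdphi_pos (x : ℝ) : 0 < stdphi x :=
  gaussianPDFReal_pos 0 1 x one_ne_zero

lemma stdphi_cont : Continuous stdphi := by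
  simp only [funext stdphi_eq]
  fun_prop

lemma stdphi_integrable : Integrable stdphi := integrable_gaussianPDFReal 0 1

lemma stdphi_integral_one : ∫ x, stdphi x = 1 := integral_gaussianPDFReal_eq_one 0 one_ne_zero

lemma hasDerivAt_stdphi (x : ℝ) : HasDerivAt stdphi (-x * stdphi x) x := by
  have h1 : HasDerivAt (fun x : ℝ => -(x^2/2)) (-x) x := by
    have := ((hasDerivAt_pow 2 x).div_const 2).neg
    simpa [Pi.neg_def] using this
  have h2 := (h1.exp).const_mul ((Real.sqrt (2*Real.pi))⁻¹)
  have he : stdphi = fun x => (Real.sqrt (2*Real.pi))⁻¹ * Real.exp (-(x^2/2)) := funext stdphi_eq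
  rw [he]
  refine h2.congr_deriv ?_
  beta_reduce
  ring

lemma integrable_pow_stdphi (n : ℕ) : Integrable (fun x => x^n * stdphi x) := by
  have hn : (-1:ℝ) < n := lt_of_lt_of_le (by norm_num) (Nat.cast_nonneg n)
  have h := (integrable_rpow_mul_exp_neg_mul_sq (b := 1/2) (by norm_num) (s := n)
    hn).const_mul ((Real.sqrt (2*Real.pi))⁻¹)
  refine h.congr ?_
  filter_upwards with x
  rw [Real.rpow_natCast, stdphi_eq]
  ring_nf

lemma tendsto_pow_stdphi_atTop (n : ℕ) :
    Tendsto (fun x => x^n * stdphi x) atTop (nhds 0) := by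
  have hexp : Tendsto (fun x : ℝ => Real.exp (-(1/2) * x)) atTop (nhds 0) := by
    have h1 : Tendsto (fun x : ℝ => -(1/2) * x) atTop atBot := by
      apply Tendsto.const_mul_atTop_of_neg (by norm_num) tendsto_id
    exact Real.tendsto_exp_atBot.comp h1
  have h := (rpow_mul_exp_neg_mul_sq_isLittleO_exp_neg (b := 1/2) (by norm_num) (s := n))
  have h2 : Tendsto (fun x : ℝ => x ^ (n:ℝ) * Real.exp (-(1/2) * x^2)) atTop (nhds 0) :=
    h.trans_tendsto hexp
  have h3 := h2.const_mul ((Real.sqrt (2*Real.pi))⁻¹)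
  rw [mul_zero] at h3
  refine h3.congr' ?_
  filter_upwards with x
  rw [Real.rpow_natCast, stdphi_eq]
  ring_nf

lemma tendsto_pow_stdphi_atBot (n : ℕ) :
    Tendsto (fun x => x^n * stdphi x) atBot (nhds 0) := by
  have h := ((tendsto_pow_stdphi_atTop n).comp tendsto_neg_atBot_atTop).const_mul ((-1:ℝ)^n)
  rw [mul_zero] at h
  refine h.congr ?_
  intro x
  have hphi : stdphi (-x) = stdphi x := by
    rw [stdphi_eq, stdphi_eq]; ring_nf
  simp only [Function.comp_apply, hphi]
  have hp : ((-1:ℝ))^n * (-x)^n = x^n := by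
    rw [← mul_pow]; norm_num
  rw [← hp]; ring

lemma tendsto_stdphi_atTop : Tendsto stdphi atTop (nhds 0) := by
  simpa using tendsto_pow_stdphi_atTop 0

lemma tendsto_stdphi_atBot : Tendsto stdphi atBot (nhds 0) := by
  simpa using tendsto_pow_stdphi_atBot 0

lemma stdPhi_eq_add (x : ℝ) :
    stdPhi x = stdPhi 0 + ∫ t in (0:ℝ)..x, stdphi t := by
  have h := intervalIntegral.integral_Iic_sub_Iic (f := stdphi) (μ := volume)
    (stdphi_integrable.integrableOn) (stdphi_integrable.integrableOn) (a := 0) (b := x)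
  simp only [stdPhi, stdphi] at *
  linarith [h]

lemma hasDerivAt_stdPhi (x : ℝ) : HasDerivAt stdPhi (stdphi x) x := by
  have h : HasDerivAt (fun y => ∫ t in (0:ℝ)..y, stdphi t) (stdphi x) x := by
    exact intervalIntegral.integral_hasDerivAt_right
      (stdphi_integrable.intervalIntegrable)
      (stdphi_cont.aestronglyMeasurable.stronglyMeasurableAtFilter)
      (stdphi_cont.continuousAt)
  have h2 := h.const_add (stdPhi 0)
  refine h2.congr_of_eventuallyEq ?_
  filter_upwards with y
  rw [stdPhi_eq_add y]

lemma stdPhi_continuous : Continuous stdPhi :=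
  continuous_iff_continuousAt.2 (fun x => (hasDerivAt_stdPhi x).continuousAt)

lemma stdPhi_strictMono : StrictMono stdPhi := by
  apply strictMono_of_deriv_pos
  intro x
  rw [(hasDerivAt_stdPhi x).deriv]
  exact stdphi_pos x

lemma setIntegral_stdphi_pos {s : Set ℝ} (h : 0 < volume s) :
    0 < ∫ x in s, stdphi x := by
  rw [setIntegral_pos_iff_support_of_nonneg_ae
    (ae_of_all _ (fun x => (stdphi_pos x).le)) (stdphi_integrable.integrableOn)]
  have hsupp : Function.support stdphi = univ := by
    ext x; simp [Function.support, (stdphi_pos x).ne']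
  rw [hsupp, univ_inter]
  exact h

lemma stdPhi_pos (x : ℝ) : 0 < stdPhi x :=
  setIntegral_stdphi_pos (by simp)

lemma stdPhi_add_Ioi (x : ℝ) : stdPhi x + ∫ t in Ioi x, stdphi t = 1 := by
  have h := integral_add_compl (s := Iic x) (μ := volume) measurableSet_Iic stdphi_integrable
  rw [compl_Iic] at h
  rw [← stdphi_integral_one]
  exact h

lemma stdPhi_lt_one (x : ℝ) : stdPhi x < 1 := by
  have h := stdPhi_add_Ioi x
  have h2 : 0 < ∫ t in Ioi x, stdphi t := setIntegral_stdphi_pos (by simp)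
  linarith

lemma integrable_neg_mul_stdphi : Integrable (fun t : ℝ => (-t) * stdphi t) := by
  refine ((integrable_pow_stdphi 1).neg).congr ?_
  filter_upwards with t
  simp only [Pi.neg_apply, pow_one, neg_mul]

lemma integrable_id_mul_stdphi : Integrable (fun t : ℝ => t * stdphi t) := by
  refine (integrable_pow_stdphi 1).congr ?_
  filter_upwards with t
  simp only [pow_one]

lemma integral_Iic_neg_mul_stdphi (x : ℝ) :
    ∫ t in Iic x, (-t) * stdphi t = stdphi x := by
  have h := integral_Iic_of_hasDerivAt_of_tendsto' (f := stdphi)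
    (f' := fun t => (-t) * stdphi t) (a := x)
    (fun t _ => hasDerivAt_stdphi t)
    (integrable_neg_mul_stdphi.integrableOn)
    tendsto_stdphi_atBot
  rw [h, sub_zero]

lemma integral_Ioi_mul_stdphi (x : ℝ) :
    ∫ t in Ioi x, t * stdphi t = stdphi x := by
  have h := integral_Ioi_of_hasDerivAt_of_tendsto' (f := fun t => -stdphi t)
    (f' := fun t => t * stdphi t) (a := x)
    (fun t _ => by simpa [Pi.neg_def] using (hasDerivAt_stdphi t).neg)
    (integrable_id_mul_stdphi.integrableOn)
    (tendsto_stdphi_atTop.neg.congr (by simp))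
  simpa using h

lemma stdPhi_le_stdphi {x : ℝ} (hx : x ≤ -1) : stdPhi x ≤ stdphi x := by
  rw [← integral_Iic_neg_mul_stdphi x]
  refine setIntegral_mono_on (stdphi_integrable.integrableOn)
    (integrable_neg_mul_stdphi.integrableOn)
    measurableSet_Iic ?_
  intro t ht
  simp only [mem_Iic] at ht
  have h1 : (1:ℝ) ≤ -t := by linarith
  have h2 := stdphi_pos t
  show stdphi t ≤ -t * stdphi t
  nlinarith

lemma one_sub_stdPhi_le_stdphi {x : ℝ} (hx : 1 ≤ x) : 1 - stdPhi x ≤ stdphi x := by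
  have h := stdPhi_add_Ioi x
  rw [← integral_Ioi_mul_stdphi x]
  have h3 : 1 - stdPhi x = ∫ t in Ioi x, stdphi t := by linarith
  rw [h3]
  refine setIntegral_mono_on (stdphi_integrable.integrableOn)
    (integrable_id_mul_stdphi.integrableOn)
    measurableSet_Ioi ?_
  intro t ht
  simp only [mem_Ioi] at ht
  have h1 : (1:ℝ) ≤ t := by linarith
  have h2 := stdphi_pos t
  show stdphi t ≤ t * stdphi t
  nlinarith

lemma tendsto_stdPhi_atBot : Tendsto stdPhi atBot (nhds 0) := by
  have h1 : ∀ᶠ x in atBot, 0 ≤ stdPhi x := by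
    filter_upwards with x; exact (stdPhi_pos x).le
  have h2 : ∀ᶠ x in atBot, stdPhi x ≤ stdphi x := by
    filter_upwards [eventually_le_atBot (-1 : ℝ)] with x hx
    exact stdPhi_le_stdphi hx
  exact tendsto_of_tendsto_of_tendsto_of_le_of_le' tendsto_const_nhds tendsto_stdphi_atBot h1 h2

lemma tendsto_stdPhi_atTop : Tendsto stdPhi atTop (nhds 1) := by
  have h1 : ∀ᶠ x in atTop, stdPhi x ≤ 1 := by
    filter_upwards with x; exact (stdPhi_lt_one x).le
  have h2 : ∀ᶠ x in atTop, 1 - stdphi x ≤ stdPhi x := by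
    filter_upwards [eventually_ge_atTop (1 : ℝ)] with x hx
    linarith [one_sub_stdPhi_le_stdphi hx]
  have h3 : Tendsto (fun x => 1 - stdphi x) atTop (nhds 1) := by
    simpa using (tendsto_stdphi_atTop.const_sub 1)
  exact tendsto_of_tendsto_of_tendsto_of_le_of_le' h3 tendsto_const_nhds h2 h1

lemma range_stdPhi : stdPhi '' univ = Ioo 0 1 := by
  apply Subset.antisymm
  · rintro _ ⟨x, -, rfl⟩
    exact ⟨stdPhi_pos x, stdPhi_lt_one x⟩
  · rintro u ⟨hu0, hu1⟩
    have ha : ∀ᶠ x in atBot, stdPhi x < u := tendsto_stdPhi_atBot.eventually_lt_const hu0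
    have hb : ∀ᶠ x in atTop, u < stdPhi x := tendsto_stdPhi_atTop.eventually_const_lt hu1
    obtain ⟨a, haa⟩ := ha.exists
    obtain ⟨b, hbb⟩ := hb.exists
    have hab : a ≤ b := by
      by_contra hcon
      push_neg at hcon
      exact absurd (stdPhi_strictMono hcon) (by linarith)
    obtain ⟨c, _, hc⟩ := intermediate_value_Icc hab (stdPhi_continuous.continuousOn)
      ⟨haa.le, hbb.le⟩
    exact ⟨c, trivial, hc⟩

lemma stdPhiInv_stdPhi (a : ℝ) : stdPhiInv (stdPhi a) = a := by
  have h : {x : ℝ | stdPhi a ≤ stdPhi x} = Ici a := by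
    ext x
    simp [stdPhi_strictMono.le_iff_le]
  rw [stdPhiInv, h, csInf_Ici]

lemma stdPhi_stdPhiInv {u : ℝ} (hu : u ∈ Ioo (0:ℝ) 1) : stdPhi (stdPhiInv u) = u := by
  obtain ⟨a, -, ha⟩ : u ∈ stdPhi '' univ := range_stdPhi ▸ hu
  rw [← ha, stdPhiInv_stdPhi]

lemma cov (g : ℝ → ℝ) :
    ∫ u in Ioo (0:ℝ) 1, g u = ∫ x, stdphi x * g (stdPhi x) := by
  have h := integral_image_eq_integral_abs_deriv_smul (s := univ) MeasurableSet.univ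
    (f := stdPhi) (f' := stdphi)
    (fun x _ => (hasDerivAt_stdPhi x).hasDerivWithinAt)
    (stdPhi_strictMono.injective.injOn) g
  rw [range_stdPhi] at h
  rw [h, setIntegral_univ]
  congr 1
  ext x
  rw [abs_of_pos (stdphi_pos x), smul_eq_mul]

lemma integrableOn_xPhi (a : ℝ) : IntegrableOn (fun x => x * stdPhi x) (Iic a) := by
  have hcont : Continuous (fun x : ℝ => x * stdPhi x) := continuous_id.mul stdPhi_continuous
  have hb : min a (-1) ≤ a := min_le_left a (-1)
  rw [← Iic_union_Ioc_eq_Iic hb]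
  refine IntegrableOn.union ?_ ((hcont.continuousOn).integrableOn_compact isCompact_Icc
    |>.mono_set Ioc_subset_Icc_self)
  refine Integrable.mono' ((integrable_pow_stdphi 1).abs).integrableOn
    (hcont.aestronglyMeasurable.restrict) ?_
  refine (ae_restrict_iff' measurableSet_Iic).2 (ae_of_all _ ?_)
  intro x hx
  simp only [mem_Iic] at hx
  have hx1 : x ≤ -1 := le_trans hx (min_le_right a (-1))
  rw [Real.norm_eq_abs, abs_mul, pow_one, abs_mul]
  have h5 : |stdPhi x| ≤ |stdphi x| := by
    rw [abs_of_pos (stdPhi_pos x), abs_of_pos (stdphi_pos x)]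
    exact stdPhi_le_stdphi hx1
  exact mul_le_mul_of_nonneg_left h5 (abs_nonneg x)

lemma integrableOn_xOneSubPhi (a : ℝ) :
    IntegrableOn (fun x => x * (1 - stdPhi x)) (Ioi a) := by
  have hcont : Continuous (fun x : ℝ => x * (1 - stdPhi x)) :=
    continuous_id.mul (continuous_const.sub stdPhi_continuous)
  have hb : a ≤ max a 1 := le_max_left a 1
  rw [← Ioc_union_Ioi_eq_Ioi hb]
  refine IntegrableOn.union ((hcont.continuousOn).integrableOn_compact isCompact_Icc
    |>.mono_set Ioc_subset_Icc_self) ?_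
  refine Integrable.mono' ((integrable_pow_stdphi 1).abs).integrableOn
    (hcont.aestronglyMeasurable.restrict) ?_
  refine (ae_restrict_iff' measurableSet_Ioi).2 (ae_of_all _ ?_)
  intro x hx
  simp only [mem_Ioi] at hx
  have hx1 : (1:ℝ) ≤ x := le_trans (le_max_right a 1) hx.le
  rw [Real.norm_eq_abs, abs_mul, pow_one, abs_mul]
  have h5 : |1 - stdPhi x| ≤ |stdphi x| := by
    rw [abs_of_nonneg (by linarith [stdPhi_lt_one x] : (0:ℝ) ≤ 1 - stdPhi x),
      abs_of_pos (stdphi_pos x)]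
    exact one_sub_stdPhi_le_stdphi hx1
  exact mul_le_mul_of_nonneg_left h5 (abs_nonneg x)

noncomputable def Haux (x : ℝ) : ℝ := ((x^2-1)/2) * stdPhi x + x/2 * stdphi x

lemma hasDerivAt_Haux (x : ℝ) : HasDerivAt Haux (x * stdPhi x) x := by
  have h1 : HasDerivAt (fun x : ℝ => (x^2-1)/2) x x := by
    have := (((hasDerivAt_pow 2 x).sub_const 1).div_const 2)
    simpa using this
  have h2 : HasDerivAt (fun x : ℝ => x/2) (1/2) x := by
    simpa using (hasDerivAt_id x).div_const 2
  have H := (h1.mul (hasDerivAt_stdPhi x)).add (h2.mul (hasDerivAt_stdphi x))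
  have he : Haux = fun x => ((x^2-1)/2) * stdPhi x + x/2 * stdphi x := rfl
  rw [he]
  refine H.congr_deriv ?_
  ring

lemma tendsto_Haux_atBot : Tendsto Haux atBot (nhds 0) := by
  have hterm2 : Tendsto (fun x : ℝ => x/2 * stdphi x) atBot (nhds 0) := by
    have := (tendsto_pow_stdphi_atBot 1).div_const 2
    rw [zero_div] at this
    refine this.congr (fun x => by simp only [pow_one]; ring)
  have hterm1 : Tendsto (fun x : ℝ => ((x^2-1)/2) * stdPhi x) atBot (nhds 0) := by
    have hup : Tendsto (fun x : ℝ => x^2/2 * stdphi x) atBot (nhds 0) := by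
      have := (tendsto_pow_stdphi_atBot 2).div_const 2
      rw [zero_div] at this
      refine this.congr (fun x => by ring)
    refine tendsto_of_tendsto_of_tendsto_of_le_of_le' tendsto_const_nhds hup ?_ ?_
    · filter_upwards [eventually_le_atBot (-1 : ℝ)] with x hx
      have h1 : (0:ℝ) ≤ (x^2-1)/2 := by nlinarith
      exact mul_nonneg h1 (stdPhi_pos x).le
    · filter_upwards [eventually_le_atBot (-1 : ℝ)] with x hx
      have h1 : stdPhi x ≤ stdphi x := stdPhi_le_stdphi hx
      have h2 : (0:ℝ) ≤ (x^2-1)/2 := by nlinarith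
      have h3 := (stdPhi_pos x).le
      nlinarith
  have := hterm1.add hterm2
  rw [add_zero] at this
  exact this

lemma intA (a : ℝ) : ∫ x in Iic a, x * stdPhi x = Haux a := by
  rw [integral_Iic_of_hasDerivAt_of_tendsto' (fun x _ => hasDerivAt_Haux x)
    (integrableOn_xPhi a) tendsto_Haux_atBot, sub_zero]

lemma intB (a : ℝ) : ∫ x in Ioi a, x * (1 - stdPhi x) = 1/2 - (a^2/2 - Haux a) := by
  have hderiv : ∀ x : ℝ, HasDerivAt (fun x => x^2/2 - Haux x) (x * (1 - stdPhi x)) x := by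
    intro x
    have h1 : HasDerivAt (fun x : ℝ => x^2/2) x x := by
      simpa using (hasDerivAt_pow 2 x).div_const 2
    have H := h1.sub (hasDerivAt_Haux x)
    refine H.congr_deriv ?_
    ring
  have htop : Tendsto (fun x : ℝ => x^2/2 - Haux x) atTop (nhds (1/2)) := by
    have key : ∀ x : ℝ, x^2/2 - Haux x
        = x^2/2 * (1 - stdPhi x) + stdPhi x / 2 - x/2 * stdphi x := by
      intro x
      simp only [Haux]
      ring
    have hA : Tendsto (fun x : ℝ => x^2/2 * (1 - stdPhi x)) atTop (nhds 0) := by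
      have hup : Tendsto (fun x : ℝ => x^2/2 * stdphi x) atTop (nhds 0) := by
        have := (tendsto_pow_stdphi_atTop 2).div_const 2
        rw [zero_div] at this
        refine this.congr (fun x => by ring)
      refine tendsto_of_tendsto_of_tendsto_of_le_of_le' tendsto_const_nhds hup ?_ ?_
      · filter_upwards [eventually_ge_atTop (1 : ℝ)] with x hx
        have h1 : stdPhi x ≤ 1 := (stdPhi_lt_one x).le
        nlinarith
      · filter_upwards [eventually_ge_atTop (1 : ℝ)] with x hx
        have h1 := one_sub_stdPhi_le_stdphi hx
        nlinarith
    have hB : Tendsto (fun x : ℝ => stdPhi x / 2) atTop (nhds (1/2)) :=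
      tendsto_stdPhi_atTop.div_const 2
    have hC : Tendsto (fun x : ℝ => x/2 * stdphi x) atTop (nhds 0) := by
      have := (tendsto_pow_stdphi_atTop 1).div_const 2
      rw [zero_div] at this
      refine this.congr (fun x => by simp only [pow_one]; ring)
    have := (hA.add hB).sub hC
    rw [zero_add, sub_zero] at this
    refine this.congr (fun x => (key x).symm)
  rw [integral_Ioi_of_hasDerivAt_of_tendsto' (fun x _ => hderiv x)
    (integrableOn_xOneSubPhi a) htop]

lemma inner_eval (a : ℝ) :
    ∫ v in Ioo (0:ℝ) 1, (stdPhiInv v / stdphi (stdPhiInv v)) * (min (stdPhi a) v - stdPhi a * v)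
      = a * stdphi a / 2 := by
  rw [cov (fun v => (stdPhiInv v / stdphi (stdPhiInv v)) * (min (stdPhi a) v - stdPhi a * v))]
  have hcongr : ∀ x : ℝ, stdphi x * ((stdPhiInv (stdPhi x) / stdphi (stdPhiInv (stdPhi x)))
      * (min (stdPhi a) (stdPhi x) - stdPhi a * stdPhi x))
      = x * (min (stdPhi a) (stdPhi x) - stdPhi a * stdPhi x) := by
    intro x
    rw [stdPhiInv_stdPhi x]
    field_simp
    rw [mul_assoc]
    exact mul_div_cancel_left₀ _ (stdphi_pos x).ne'
  rw [integral_congr_ae (ae_of_all _ hcongr)]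
  have hIic : ∀ x ∈ Iic a, x * (min (stdPhi a) (stdPhi x) - stdPhi a * stdPhi x)
      = (1 - stdPhi a) * (x * stdPhi x) := by
    intro x hx
    simp only [mem_Iic] at hx
    rw [min_eq_right (stdPhi_strictMono.monotone hx)]
    ring
  have hIoi : ∀ x ∈ Ioi a, x * (min (stdPhi a) (stdPhi x) - stdPhi a * stdPhi x)
      = stdPhi a * (x * (1 - stdPhi x)) := by
    intro x hx
    simp only [mem_Ioi] at hx
    rw [min_eq_left (stdPhi_strictMono.monotone hx.le)]
    ring
  have hint1 : IntegrableOn (fun x => x * (min (stdPhi a) (stdPhi x) - stdPhi a * stdPhi x))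
      (Iic a) := by
    have base : IntegrableOn (fun x => (1 - stdPhi a) * (x * stdPhi x)) (Iic a) :=
      (integrableOn_xPhi a).const_mul (1 - stdPhi a)
    exact base.congr_fun (fun x hx => (hIic x hx).symm) measurableSet_Iic
  have hint2 : IntegrableOn (fun x => x * (min (stdPhi a) (stdPhi x) - stdPhi a * stdPhi x))
      (Ioi a) := by
    have base : IntegrableOn (fun x => stdPhi a * (x * (1 - stdPhi x))) (Ioi a) :=
      (integrableOn_xOneSubPhi a).const_mul (stdPhi a)
    exact base.congr_fun (fun x hx => (hIoi x hx).symm) measurableSet_Ioi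
  rw [← intervalIntegral.integral_Iic_add_Ioi hint1 hint2]
  rw [setIntegral_congr_fun measurableSet_Iic hIic,
    setIntegral_congr_fun measurableSet_Ioi hIoi,
    integral_const_mul, integral_const_mul, intA, intB]
  simp only [Haux]
  ring

end Aux

/-- Lemma B: for a continuous c.d.f. `F` with square-integrable quantile function,
`∫₀¹∫₀¹ [F⁻¹(u)/φ(Φ⁻¹(u))]·[Φ⁻¹(v)/φ(Φ⁻¹(v))]·(min(u,v)−uv) du dv
  = (1/2)·∫₀¹ F⁻¹(u)Φ⁻¹(u) du`. -/
theorem stmt2 (F : ℝ → ℝ) (hFc : Continuous F) (hFm : Monotone F)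
    (h0 : Filter.Tendsto F Filter.atBot (nhds 0))
    (h1 : Filter.Tendsto F Filter.atTop (nhds 1))
    (Finv : ℝ → ℝ) (hFinv : ∀ u, Finv u = sInf {x : ℝ | u ≤ F x})
    (hL2 : IntegrableOn (fun u => (Finv u) ^ 2) (Set.Ioo (0:ℝ) 1)) :
    ∫ u in Set.Ioo (0:ℝ) 1, ∫ v in Set.Ioo (0:ℝ) 1,
        (Finv u / stdphi (stdPhiInv u)) * (stdPhiInv v / stdphi (stdPhiInv v))
          * (min u v - u * v)
      = (1/2) * ∫ u in Set.Ioo (0:ℝ) 1, Finv u * stdPhiInv u := by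
  rw [← MeasureTheory.integral_const_mul]
  refine setIntegral_congr_fun measurableSet_Ioo ?_
  intro u hu
  have hPhiInv : stdPhi (stdPhiInv u) = u := stdPhi_stdPhiInv hu
  have hinner : ∫ v in Set.Ioo (0:ℝ) 1,
      (Finv u / stdphi (stdPhiInv u)) * ((stdPhiInv v / stdphi (stdPhiInv v)) * (min u v - u * v))
      = (Finv u / stdphi (stdPhiInv u)) * (stdPhiInv u * stdphi (stdPhiInv u) / 2) := by
    rw [MeasureTheory.integral_const_mul]
    congr 1
    have h := inner_eval (stdPhiInv u)
    rw [hPhiInv] at h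
    exact h
  simp only [mul_assoc]
  rw [hinner]
  have hφ : stdphi (stdPhiInv u) ≠ 0 := (stdphi_pos _).ne'
  field_simp
end

section
/- Let Σ_x be a k×k positive definite matrix, δ ∈ ℝ^k, σ_e² > 0, and c₂ ∈ ℝ. The (k+2)×(k+2) block matrix M = [[Σ_x, Σ_x δ, 0],[δ'Σ_x, δ'Σ_x δ + σ_e², c₂],[0, c₂, 1]] is invertible if and only if c₂² ≠ σ_e². -/
open Matrix

/-!
Eliminating the `x`-block by unitriangular row and column operations turns `M` into
`diag(Σₓ, [[σ_e², c₂], [c₂, 1]])`, so `det M = det Σₓ · (σ_e² - c₂²)` with `det Σₓ > 0`.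
-/

/-- The (k+2)×(k+2) matrix `M = [[Σₓ, Σₓδ, 0],[δ'Σₓ, δ'Σₓδ + σ_e², c₂],[0, c₂, 1]]`
from Proposition 3.1, indexed by `Fin k ⊕ Fin 2`. -/
noncomputable def Mmat {k : ℕ} (S : Matrix (Fin k) (Fin k) ℝ) (δ : Fin k → ℝ)
    (σe2 c2 : ℝ) : Matrix (Fin k ⊕ Fin 2) (Fin k ⊕ Fin 2) ℝ :=
  Matrix.of fun i j =>
    match i, j with
    | Sum.inl a, Sum.inl b => S a b
    | Sum.inl a, Sum.inr b => if b = 0 then S.mulVec δ a else 0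
    | Sum.inr a, Sum.inl b => if a = 0 then Matrix.vecMul δ S b else 0
    | Sum.inr a, Sum.inr b =>
      if a = 0 ∧ b = 0 then δ ⬝ᵥ S.mulVec δ + σe2
      else if (a = 0 ∧ b = 1) ∨ (a = 1 ∧ b = 0) then c2
      else 1

section BlockCongruence

variable {R m n : Type*} [CommRing R] [Fintype m] [Fintype n] [DecidableEq m] [DecidableEq n]

theorem Matrix.fromBlocks_eq_lower_mul_diag_mul_upper (A : Matrix m m R)
    (B : Matrix m n R) (C : Matrix n m R) (D : Matrix n n R) :
    fromBlocks A (A * B) (C * A) (C * A * B + D) =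
      fromBlocks 1 0 C 1 * fromBlocks A 0 0 D * fromBlocks 1 B 0 1 := by
  simp only [fromBlocks_multiply]
  simp [Matrix.mul_assoc, add_comm]

theorem Matrix.det_fromBlocks_mul_mul (A : Matrix m m R)
    (B : Matrix m n R) (C : Matrix n m R) (D : Matrix n n R) :
    (fromBlocks A (A * B) (C * A) (C * A * B + D)).det = A.det * D.det := by
  rw [fromBlocks_eq_lower_mul_diag_mul_upper, det_mul, det_mul,
    det_fromBlocks_zero₁₂, det_fromBlocks_zero₂₁, det_fromBlocks_zero₂₁]
  simp

end BlockCongruence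

theorem Mmat_eq_fromBlocks {k : ℕ} (S : Matrix (Fin k) (Fin k) ℝ) (δ : Fin k → ℝ) (σe2 c2 : ℝ) :
    Mmat S δ σe2 c2 =
      fromBlocks S (S * vecMulVec δ (Pi.single 0 1)) (vecMulVec (Pi.single 0 1) δ * S)
        (vecMulVec (Pi.single 0 1) δ * S * vecMulVec δ (Pi.single 0 1) + !![σe2, c2; c2, 1]) := by
  ext (a | a) (b | b)
  · rfl
  · fin_cases b <;> simp [Mmat, mul_vecMulVec, vecMulVec_apply]
  · fin_cases a <;> simp [Mmat, vecMulVec_mul, vecMulVec_apply]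
  · fin_cases a <;> fin_cases b <;>
      simp [Mmat, vecMulVec_mul, mul_vecMulVec, vecMulVec_apply, mulVec, dotProduct_mulVec]

theorem det_Mmat {k : ℕ} (S : Matrix (Fin k) (Fin k) ℝ) (δ : Fin k → ℝ) (σe2 c2 : ℝ) :
    (Mmat S δ σe2 c2).det = S.det * (σe2 - c2 ^ 2) := by
  rw [Mmat_eq_fromBlocks, det_fromBlocks_mul_mul, det_fin_two_of]
  ring

theorem stmt10_general {k : ℕ} (S : Matrix (Fin k) (Fin k) ℝ) (hS : S.PosDef)
    (δ : Fin k → ℝ) (σe2 c2 : ℝ) :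
    IsUnit (Mmat S δ σe2 c2) ↔ c2 ^ 2 ≠ σe2 := by
  rw [isUnit_iff_isUnit_det, isUnit_iff_ne_zero, det_Mmat, mul_ne_zero_iff_left hS.det_pos.ne',
    sub_ne_zero, ne_comm]

/-- `M` is invertible if and only if `c₂² ≠ σ_e²`. -/
theorem stmt10 {k : ℕ} (S : Matrix (Fin k) (Fin k) ℝ) (hS : S.PosDef)
    (δ : Fin k → ℝ) (σe2 c2 : ℝ) (hσ : 0 < σe2) :
    IsUnit (Mmat S δ σe2 c2) ↔ c2 ^ 2 ≠ σe2 :=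
  stmt10_general S hS δ σe2 c2
end

section
/- Suppose y = β'x + γz + u with z = δ'x + e, u = ρ f(e) + ε, E[ε | x,z] = 0, e independent of x, Var(e) > 0, f strictly monotone with f(e) ~ N(0,1). Then the parameters (β', γ, ρ)' are identified (i.e., no nontrivial linear combination λ₁'x + λ₂z + λ₃f(e) = 0 a.s. exists) if and only if the distribution of e is not normal. -/
open MeasureTheory ProbabilityTheory Matrix

section Helpers
open Real Set
open scoped NNReal ENNReal

private lemma gauss_sq_integrable : Integrable (fun t : ℝ => t ^ 2) (gaussianReal 0 1) := by
  rw [gaussianReal_of_var_ne_zero _ one_ne_zero,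
    integrable_withDensity_iff (measurable_gaussianPDF 0 1)
      (ae_of_all _ fun _ => ENNReal.ofReal_lt_top)]
  have h := integrable_rpow_mul_exp_neg_mul_sq (b := (1:ℝ)/2) (by norm_num) (s := 2) (by norm_num)
  have h2 := h.const_mul ((Real.sqrt (2 * π))⁻¹)
  apply h2.congr
  filter_upwards with t
  rw [gaussianPDF, ENNReal.toReal_ofReal (gaussianPDFReal_nonneg _ _ _), gaussianPDFReal]
  rw [show ((2:ℝ):ℝ) = ((2:ℕ):ℝ) by norm_num, Real.rpow_natCast]
  norm_num
  ring_nf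

private lemma gauss_map_neg (v : ℝ≥0) :
    Measure.map (fun y : ℝ => (-1) * y) (gaussianReal 0 v) = gaussianReal 0 v := by
  rw [gaussianReal_map_const_mul]
  have : (⟨(-1:ℝ)^2, sq_nonneg _⟩ : ℝ≥0) = 1 := by ext; norm_num
  rw [show (NNReal.mk ((-1:ℝ)^2) (sq_nonneg _)) = 1 from this]
  norm_num

private lemma gauss_singleton (m : ℝ) {v : ℝ≥0} (hv : v ≠ 0) (t : ℝ) : gaussianReal m v {t} = 0 :=
  gaussianReal_absolutelyContinuous m hv (measure_singleton t)

private lemma gauss_Iio (m : ℝ) {v : ℝ≥0} (hv : v ≠ 0) (t : ℝ) :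
    gaussianReal m v (Iio t) = gaussianReal m v (Iic t) := by
  refine le_antisymm (measure_mono Iio_subset_Iic_self) ?_
  calc gaussianReal m v (Iic t) = gaussianReal m v (Iio t ∪ {t}) := by rw [Iio_union_right]
    _ ≤ gaussianReal m v (Iio t) + gaussianReal m v {t} := measure_union_le _ _
    _ = gaussianReal m v (Iio t) := by rw [gauss_singleton m hv t, add_zero]

private lemma gauss_Ioi (m : ℝ) {v : ℝ≥0} (hv : v ≠ 0) (t : ℝ) :
    gaussianReal m v (Ioi t) = gaussianReal m v (Ici t) := by
  refine le_antisymm (measure_mono Ioi_subset_Ici_self) ?_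
  calc gaussianReal m v (Ici t) = gaussianReal m v (Ioi t ∪ {t}) := by rw [Ioi_union_left]
    _ ≤ gaussianReal m v (Ioi t) + gaussianReal m v {t} := measure_union_le _ _
    _ = gaussianReal m v (Ioi t) := by rw [gauss_singleton m hv t, add_zero]

private lemma gauss_cdf_inj {v : ℝ≥0} (hv : v ≠ 0) {a b : ℝ}
    (h : gaussianReal 0 v (Iic a) = gaussianReal 0 v (Iic b)) : a = b := by
  by_contra hab
  have key : ∀ c d : ℝ, c < d →
      gaussianReal 0 v (Iic c) = gaussianReal 0 v (Iic d) → False := by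
    intro c d hcd heq
    have hu : Iic c ∪ Ioc c d = Iic d := Set.Iic_union_Ioc_eq_Iic hcd.le
    have hdisj : Disjoint (Iic c) (Ioc c d) := by
      simp only [Set.disjoint_left, mem_Iic, mem_Ioc]
      intro x hx hx2
      exact absurd hx2.1 (not_lt.mpr hx)
    have hm := measure_union hdisj measurableSet_Ioc (μ := gaussianReal 0 v)
    rw [hu, ← heq] at hm
    have h0 : gaussianReal 0 v (Ioc c d) = 0 := by
      have hfin : gaussianReal 0 v (Iic c) ≠ ⊤ := measure_ne_top _ _
      exact (ENNReal.add_right_inj hfin).mp (by simpa using hm.symm)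
    have hvol := gaussianReal_absolutelyContinuous' 0 hv h0
    rw [Real.volume_Ioc] at hvol
    simp only [ENNReal.ofReal_eq_zero] at hvol
    linarith
  rcases lt_or_gt_of_ne hab with h1 | h1
  · exact key a b h1 h
  · exact key b a h1 h.symm

private lemma gauss_Ici_eq (v : ℝ≥0) (t : ℝ) :
    gaussianReal 0 v (Ici t) = gaussianReal 0 v (Iic (-t)) := by
  conv_rhs => rw [← gauss_map_neg v]
  rw [Measure.map_apply (by fun_prop) measurableSet_Iic]
  congr 1
  ext y
  simp

private lemma gauss_mean (m : ℝ) (v : ℝ≥0)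
    (hint : Integrable (fun x => x) (gaussianReal m v)) :
    ∫ x, x ∂gaussianReal m v = m := by
  have hmap : gaussianReal m v = (gaussianReal 0 v).map (· + m) := by
    rw [gaussianReal_map_add_const m, zero_add]
  have hint0 : Integrable (fun x : ℝ => x + m) (gaussianReal 0 v) := by
    rw [hmap] at hint
    have := (integrable_map_measure (f := fun x : ℝ => x + m) (g := fun x : ℝ => x)
      aestronglyMeasurable_id (by fun_prop)).mp hint
    exact this.congr (ae_of_all _ fun x => rfl)
  have hintid : Integrable (fun x : ℝ => x) (gaussianReal 0 v) := by
    have := hint0.sub (integrable_const m)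
    exact this.congr (ae_of_all _ fun x => by simp)
  have hJ : ∫ x, x ∂gaussianReal 0 v = 0 := by
    have h1 : ∫ x, x ∂(Measure.map (fun y : ℝ => (-1) * y) (gaussianReal 0 v))
        = ∫ x, (-1) * x ∂gaussianReal 0 v :=
      integral_map (by fun_prop) aestronglyMeasurable_id
    rw [gauss_map_neg v, integral_const_mul] at h1
    linarith
  have h2 : ∫ x, x ∂((gaussianReal 0 v).map (· + m)) = ∫ x, (x + m) ∂gaussianReal 0 v :=
    integral_map (by fun_prop) aestronglyMeasurable_id
  rw [hmap, h2, integral_add hintid (integrable_const m), hJ, integral_const]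
  simp

private lemma f_linear {Ω : Type*} [MeasurableSpace Ω] (P : Measure Ω) [IsProbabilityMeasure P]
    (e : Ω → ℝ) (he : Measurable e) (f : ℝ → ℝ) (hfm : Measurable f)
    (hf : StrictMono f ∨ StrictAnti f) {v : ℝ≥0} (hv : v ≠ 0)
    (hmape : Measure.map e P = gaussianReal 0 v)
    (hfe : Measure.map (fun ω => f (e ω)) P = gaussianReal 0 1) :
    ∃ ε : ℝ, ε ≠ 0 ∧ ∀ s, f s = ε * (s / Real.sqrt v) := by
  have hvpos : (0:ℝ) < (v:ℝ) := by
    have := pos_iff_ne_zero.mpr hv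
    exact_mod_cast this
  set s' : ℝ := Real.sqrt v with hs'def
  have hs' : 0 < s' := Real.sqrt_pos.mpr hvpos
  have hmapv : gaussianReal 0 v = Measure.map (fun y : ℝ => s' * y) (gaussianReal 0 1) := by
    rw [gaussianReal_map_const_mul s', mul_zero]
    congr 1
    ext
    simp [hs'def, Real.sq_sqrt (le_of_lt hvpos)]
  have hIic : ∀ s : ℝ, gaussianReal 0 v (Iic s) = gaussianReal 0 1 (Iic (s / s')) := by
    intro s
    rw [hmapv, Measure.map_apply (by fun_prop) measurableSet_Iic]
    congr 1
    ext y
    simp only [mem_preimage, mem_Iic]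
    rw [le_div_iff₀ hs', mul_comm]
  have hIci : ∀ s : ℝ, gaussianReal 0 v (Ici s) = gaussianReal 0 1 (Ici (s / s')) := by
    intro s
    rw [hmapv, Measure.map_apply (by fun_prop) measurableSet_Ici]
    congr 1
    ext y
    simp only [mem_preimage, mem_Ici]
    rw [div_le_iff₀ hs', mul_comm]
  have hPle : ∀ t : ℝ, P {ω | f (e ω) ≤ t} = gaussianReal 0 1 (Iic t) := fun t => by
    rw [← hfe]; exact (Measure.map_apply (hfm.comp he) (measurableSet_Iic)).symm
  have hPlt : ∀ t : ℝ, P {ω | f (e ω) < t} = gaussianReal 0 1 (Iio t) := fun t => by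
    rw [← hfe]; exact (Measure.map_apply (hfm.comp he) (measurableSet_Iio)).symm
  have hEle : ∀ s : ℝ, P {ω | e ω ≤ s} = gaussianReal 0 v (Iic s) := fun s => by
    rw [← hmape]; exact (Measure.map_apply he (measurableSet_Iic)).symm
  have hElt : ∀ s : ℝ, P {ω | e ω < s} = gaussianReal 0 v (Iio s) := fun s => by
    rw [← hmape]; exact (Measure.map_apply he (measurableSet_Iio)).symm
  have hEge : ∀ s : ℝ, P {ω | s ≤ e ω} = gaussianReal 0 v (Ici s) := fun s => by
    rw [← hmape]; exact (Measure.map_apply he (measurableSet_Ici)).symm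
  have hEgt : ∀ s : ℝ, P {ω | s < e ω} = gaussianReal 0 v (Ioi s) := fun s => by
    rw [← hmape]; exact (Measure.map_apply he (measurableSet_Ioi)).symm
  rcases hf with hmono | hanti
  · refine ⟨1, one_ne_zero, fun s => ?_⟩
    have h1 : gaussianReal 0 v (Iic s) ≤ gaussianReal 0 1 (Iic (f s)) := by
      rw [← hPle, ← hEle]
      exact measure_mono fun ω (hω : e ω ≤ s) => hmono.monotone hω
    have h2 : gaussianReal 0 1 (Iic (f s)) ≤ gaussianReal 0 v (Iic s) := by
      rw [← gauss_Iio 0 one_ne_zero, ← hPlt, ← gauss_Iio 0 hv, ← hElt]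
      exact measure_mono fun ω (hω : f (e ω) < f s) => hmono.lt_iff_lt.mp hω
    have heq : gaussianReal 0 1 (Iic (f s)) = gaussianReal 0 1 (Iic (s / s')) := by
      rw [le_antisymm h2 h1, hIic]
    have := gauss_cdf_inj one_ne_zero heq
    rw [this]; ring
  · refine ⟨-1, by norm_num, fun s => ?_⟩
    have h1 : gaussianReal 0 v (Ici s) ≤ gaussianReal 0 1 (Iic (f s)) := by
      rw [← hPle, ← hEge]
      exact measure_mono fun ω (hω : s ≤ e ω) => hanti.antitone hω
    have h2 : gaussianReal 0 1 (Iic (f s)) ≤ gaussianReal 0 v (Ici s) := by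
      rw [← gauss_Iio 0 one_ne_zero, ← hPlt, ← gauss_Ioi 0 hv, ← hEgt]
      exact measure_mono fun ω (hω : f (e ω) < f s) => hanti.lt_iff_gt.mp hω
    have heq : gaussianReal 0 1 (Iic (f s)) = gaussianReal 0 1 (Iic (-(s / s'))) := by
      rw [le_antisymm h2 h1, hIci, gauss_Ici_eq]
    have := gauss_cdf_inj one_ne_zero heq
    rw [this]; ring

end Helpers

/-- Theorem 2.1 (identification): in the model `y = β'x + γz + u`, `z = δ'x + e`,
`u = ρf(e) + ε` with `e ⟂ x`, `Var(e) > 0`, `f` strictly monotone and `f(e) ~ N(0,1)`,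
the parameters are identified — no nontrivial linear combination
`λ₁'x + λ₂z + λ₃f(e)` vanishes a.s. — iff the distribution of `e` is not normal. -/
theorem stmt12 {Ω : Type*} [MeasurableSpace Ω] (P : Measure Ω) [IsProbabilityMeasure P]
    (k : ℕ) (x : Ω → Fin k → ℝ) (hx : Measurable x)
    (hxx : ∀ i j, Integrable (fun ω => x ω i * x ω j) P)
    (hSx : Matrix.PosDef (Matrix.of fun i j => ∫ ω, x ω i * x ω j ∂P))
    (e : Ω → ℝ) (he : Measurable e)
    (hindep : IndepFun e x P)
    (heL2 : Integrable (fun ω => (e ω) ^ 2) P)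
    (hemean : ∫ ω, e ω ∂P = 0)
    (hevar : 0 < ∫ ω, (e ω) ^ 2 ∂P)
    (δ : Fin k → ℝ) (z : Ω → ℝ) (hz : ∀ ω, z ω = δ ⬝ᵥ x ω + e ω)
    (f : ℝ → ℝ) (hf : StrictMono f ∨ StrictAnti f)
    (hfe : Measure.map (fun ω => f (e ω)) P = gaussianReal 0 1) :
    (∀ (l1 : Fin k → ℝ) (l2 l3 : ℝ),
        (∀ᵐ ω ∂P, l1 ⬝ᵥ x ω + l2 * z ω + l3 * f (e ω) = 0) →
        l1 = 0 ∧ l2 = 0 ∧ l3 = 0)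
      ↔ ∀ (m : ℝ) (v : NNReal), Measure.map e P ≠ gaussianReal m v := by
  have hfm : Measurable f :=
    hf.elim (fun h => h.monotone.measurable) (fun h => h.antitone.measurable)
  have heMem : MemLp e 2 P :=
    (memLp_two_iff_integrable_sq he.aestronglyMeasurable).mpr heL2
  constructor
  · intro hI m v hmapP
    -- v ≠ 0
    have hv : v ≠ 0 := by
      intro h0
      rw [h0, gaussianReal_zero_var] at hmapP
      have hset : P (e ⁻¹' {m}ᶜ) = 0 := by
        rw [← Measure.map_apply he (measurableSet_singleton m).compl, hmapP,
          Measure.dirac_apply' _ (measurableSet_singleton m).compl]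
        simp
      have he0 : ∀ᵐ ω ∂P, e ω = m := by
        rw [ae_iff]
        exact hset
      have hm0 : m = 0 := by
        have : ∫ ω, e ω ∂P = m := by
          rw [integral_congr_ae (he0.mono fun ω h => h)]
          simp
        rw [hemean] at this
        exact this.symm
      have h2 : (fun ω => (e ω) ^ 2) =ᵐ[P] (fun _ => (0:ℝ)) :=
        he0.mono fun ω h => by simp [h, hm0]
      have : ∫ ω, (e ω) ^ 2 ∂P = 0 := by
        rw [integral_congr_ae h2]
        simp
      linarith
    -- mean is zero
    have heInt : Integrable e P := heMem.integrable one_le_two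
    have hintid : Integrable (fun t : ℝ => t) (gaussianReal m v) := by
      rw [← hmapP]
      exact (integrable_map_measure aestronglyMeasurable_id he.aemeasurable).mpr heInt
    have hm0 : m = 0 := by
      have h1 : ∫ t, t ∂(Measure.map e P) = ∫ ω, e ω ∂P :=
        integral_map he.aemeasurable aestronglyMeasurable_id
      rw [hmapP, gauss_mean m v hintid, hemean] at h1
      exact h1
    rw [hm0] at hmapP
    obtain ⟨ε, hε, hlin⟩ := f_linear P e he f hfm hf hv hmapP hfe
    have hs' : (0:ℝ) < Real.sqrt v := Real.sqrt_pos.mpr (by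
      have := pos_iff_ne_zero.mpr hv
      exact_mod_cast this)
    have hzero : ∀ᵐ ω ∂P,
        ((ε / Real.sqrt v) • δ) ⬝ᵥ x ω + (-(ε / Real.sqrt v)) * z ω + 1 * f (e ω) = 0 := by
      refine ae_of_all _ fun ω => ?_
      rw [hz ω, hlin (e ω), smul_dotProduct]
      simp only [smul_eq_mul]
      ring
    exact one_ne_zero (hI _ _ _ hzero).2.2
  · intro hne l1 l2 l3 h
    set μv : Fin k → ℝ := l1 + l2 • δ with hμv
    set X : Ω → ℝ := fun ω => μv ⬝ᵥ x ω with hX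
    set Y : Ω → ℝ := fun ω => l2 * e ω + l3 * f (e ω) with hY
    have hXY : ∀ᵐ ω ∂P, X ω + Y ω = 0 := by
      filter_upwards [h] with ω hω
      rw [hz ω] at hω
      simp only [hX, hY, hμv, add_dotProduct, smul_dotProduct, smul_eq_mul]
      linear_combination hω
    -- measurability
    have hXmeas : Measurable X := by
      simp only [hX, dotProduct]
      exact Finset.measurable_sum _ fun i _ => ((measurable_pi_apply i).comp hx).const_mul _
    have hYmeas : Measurable Y := ((he.const_mul l2).add ((hfm.comp he).const_mul l3))
    -- independence
    have hXYindep : IndepFun X Y P := by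
      have := (hindep.symm).comp
        (show Measurable fun v : Fin k → ℝ => μv ⬝ᵥ v by
          simp only [dotProduct]
          exact Finset.measurable_sum _ fun i _ => (measurable_pi_apply i).const_mul _)
        (show Measurable fun t : ℝ => l2 * t + l3 * f t by fun_prop)
      exact this
    -- L²
    have hXsq : Integrable (fun ω => (X ω) ^ 2) P := by
      have hrw : (fun ω => (X ω) ^ 2)
          = fun ω => ∑ i, ∑ j, (μv i * μv j) * (x ω i * x ω j) := by
        funext ω
        rw [sq]
        simp only [hX, dotProduct, Finset.sum_mul_sum]
        refine Finset.sum_congr rfl fun i _ => Finset.sum_congr rfl fun j _ => by ring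
      rw [hrw]
      exact integrable_finset_sum _ fun i _ =>
        integrable_finset_sum _ fun j _ => (hxx i j).const_mul _
    have hXm : MemLp X 2 P :=
      (memLp_two_iff_integrable_sq hXmeas.aestronglyMeasurable).mpr hXsq
    have hfeMem : MemLp (fun ω => f (e ω)) 2 P := by
      refine (memLp_two_iff_integrable_sq
        (f := fun ω => f (e ω)) (hfm.comp he).aestronglyMeasurable).mpr ?_
      have hInt : Integrable (fun t : ℝ => t ^ 2) (Measure.map (fun ω => f (e ω)) P) := by
        rw [hfe]; exact gauss_sq_integrable
      exact (integrable_map_measure (by fun_prop) (hfm.comp he).aemeasurable).mp hInt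
    have hYm : MemLp Y 2 P := (heMem.const_mul l2).add (hfeMem.const_mul l3)
    -- variance of X + Y is zero
    have hS0 : (X + Y) =ᵐ[P] (0 : Ω → ℝ) := hXY
    have hSmean : ∫ ω, (X + Y) ω ∂P = 0 := by
      rw [integral_congr_ae hS0]
      simp
    have hev : evariance (X + Y) P = 0 := by
      rw [evariance_eq_zero_iff (hXm.add hYm).aestronglyMeasurable.aemeasurable]
      filter_upwards [hS0] with ω hω
      rw [hω, hSmean]
      simp
    have hvarS : variance (X + Y) P = 0 := by
      rw [variance, hev]
      simp
    have hsum : variance X P + variance Y P = 0 := by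
      rw [← hXYindep.variance_add hXm hYm]
      exact hvarS
    have hvY : variance Y P = 0 := by
      have h1 := variance_nonneg X P
      have h2 := variance_nonneg Y P
      linarith
    have hevY : evariance Y P = 0 := by
      have hlt := hYm.evariance_lt_top
      have := (ENNReal.toReal_eq_zero_iff _).mp hvY
      rcases this with h | h
      · exact h
      · exact absurd h hlt.ne
    set c : ℝ := ∫ ω, Y ω ∂P with hc
    have hYc : ∀ᵐ ω ∂P, Y ω = c := (evariance_eq_zero_iff hYm.aestronglyMeasurable.aemeasurable).mp hevY
    -- l2 = 0
    have hl2 : l2 = 0 := by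
      by_contra hl2
      set g : ℝ → ℝ := fun t => (-(l3 / l2)) * t + c / l2 with hg
      have hee : ∀ᵐ ω ∂P, e ω = g (f (e ω)) := by
        filter_upwards [hYc] with ω hω
        simp only [hY] at hω
        simp only [hg]
        field_simp
        linear_combination hω
      have hgm : Measurable g := by fun_prop
      have hm1 : Measurable fun t : ℝ => t + c / l2 := by fun_prop
      have hm2 : Measurable fun t : ℝ => (-(l3 / l2)) * t := by fun_prop
      have hmape : Measure.map e P
          = Measure.map g (Measure.map (fun ω => f (e ω)) P) := by
        rw [Measure.map_map hgm (show Measurable fun ω => f (e ω) from hfm.comp he)]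
        exact Measure.map_congr hee
      have hgg : Measure.map g (gaussianReal 0 1)
          = Measure.map (fun t : ℝ => t + c / l2)
              (Measure.map (fun t : ℝ => (-(l3 / l2)) * t) (gaussianReal 0 1)) := by
        rw [Measure.map_map hm1 hm2]
        rfl
      rw [hfe, hgg, gaussianReal_map_const_mul, mul_zero,
        gaussianReal_map_add_const, zero_add] at hmape
      exact hne _ _ hmape
    -- l3 = 0
    have hl3 : l3 = 0 := by
      by_contra hl3
      have hfec : ∀ᵐ ω ∂P, f (e ω) = c / l3 := by
        filter_upwards [hYc] with ω hω
        simp only [hY, hl2, zero_mul, zero_add] at hω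
        field_simp
        linarith [hω]

      have hset : Measure.map (fun ω => f (e ω)) P ({c / l3}ᶜ) = 0 := by
        rw [Measure.map_apply (show Measurable fun ω => f (e ω) from hfm.comp he)
          (measurableSet_singleton _).compl]
        rw [ae_iff] at hfec
        exact hfec
      rw [hfe] at hset
      have h1 : (gaussianReal 0 1) Set.univ
          ≤ (gaussianReal 0 1) {c / l3} + (gaussianReal 0 1) ({c / l3}ᶜ) := by
        rw [← Set.union_compl_self {c / l3}] ; exact measure_union_le _ _
      rw [gauss_singleton 0 one_ne_zero, hset, measure_univ] at h1
      simp at h1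
    -- l1 = 0
    have hY0 : ∀ ω, Y ω = 0 := fun ω => by simp [hY, hl2, hl3]
    have hX0 : ∀ᵐ ω ∂P, X ω = 0 := by
      filter_upwards [hXY] with ω hω
      rw [hY0 ω, add_zero] at hω
      exact hω
    have hXsq0 : ∫ ω, (X ω) ^ 2 ∂P = 0 := by
      have hsq : (fun ω => (X ω) ^ 2) =ᵐ[P] (fun _ => (0:ℝ)) :=
        hX0.mono fun ω hω => by simp [hω]
      rw [integral_congr_ae hsq]
      simp
    have hμl1 : μv = l1 := by simp [hμv, hl2]
    have hexp : ∫ ω, (X ω) ^ 2 ∂P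
        = l1 ⬝ᵥ ((Matrix.of fun i j => ∫ ω, x ω i * x ω j ∂P) *ᵥ l1) := by
      have hrw : (fun ω => (X ω) ^ 2)
          = fun ω => ∑ i, ∑ j, (l1 i * l1 j) * (x ω i * x ω j) := by
        funext ω
        rw [sq]
        simp only [hX, hμl1, dotProduct, Finset.sum_mul_sum]
        refine Finset.sum_congr rfl fun i _ => Finset.sum_congr rfl fun j _ => by ring
      rw [hrw, integral_finset_sum _ fun i _ =>
        integrable_finset_sum _ fun j _ => (hxx i j).const_mul _]
      simp_rw [integral_finset_sum _ fun j (_ : j ∈ Finset.univ) => (hxx _ j).const_mul _]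
      simp_rw [integral_const_mul]
      simp only [dotProduct, mulVec, Matrix.of_apply, dotProduct]
      rw [Finset.sum_comm]
      refine Finset.sum_congr rfl fun i _ => ?_
      rw [Finset.mul_sum]
      refine Finset.sum_congr rfl fun j _ => ?_
      have hcomm : (∫ a, x a j * x a i ∂P) = ∫ ω, x ω i * x ω j ∂P :=
        integral_congr_ae (ae_of_all _ fun a => mul_comm _ _)
      rw [hcomm]
      ring
    have hl1 : l1 = 0 := by
      by_contra hl1
      have hpos := hSx.dotProduct_mulVec_pos hl1
      have : star l1 = l1 := by
        funext i
        simp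
      rw [this] at hpos
      rw [hexp] at hXsq0
      rw [hXsq0] at hpos
      exact lt_irrefl _ hpos
    exact ⟨hl1, hl2, hl3⟩
end

section
/- Suppose λ₁'x + λ₂z + λ₃ f(e) = 0 almost surely, where z = δ'x + e, e is independent of x with Var(e) > 0, f is strictly increasing, and f(e) ~ N(0,1). Then λ₂ ≠ 0 and λ₃ ≠ 0, or else λ₁ = λ₂ = λ₃ = 0. -/
open MeasureTheory ProbabilityTheory Matrix


lemma gauss_half : (gaussianReal 0 1) (Set.Iic 0) = 1/2 := by
  set μ := gaussianReal 0 1 with hμ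
  have hsymm : μ.map (fun x : ℝ => -1 * x) = μ := by
    rw [hμ, gaussianReal_map_const_mul (-1)]
    congr 1
    · norm_num
    · ext; norm_num
  have hpre : (fun x : ℝ => -1 * x) ⁻¹' Set.Iic 0 = Set.Ici 0 := by
    ext t; simp
  have h1 : μ (Set.Iic 0) = μ (Set.Ici 0) := by
    conv_lhs => rw [← hsymm]
    rw [Measure.map_apply (by fun_prop : Measurable fun x : ℝ => -1 * x) measurableSet_Iic, hpre]
  have hz : μ {(0:ℝ)} = 0 := by
    refine gaussianReal_absolutelyContinuous 0 (by norm_num) ?_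
    simp
  have h2 : μ (Set.Ici 0) = μ (Set.Ioi 0) := by
    have hs : Set.Ici (0:ℝ) = {0} ∪ Set.Ioi 0 := by
      ext t; simp [le_iff_lt_or_eq, or_comm, eq_comm]
    rw [hs, Set.union_comm]
    exact le_antisymm ((measure_union_le _ _).trans (by rw [hz, add_zero])) (measure_mono Set.subset_union_left)
  have h3 : μ (Set.Iic 0) + μ (Set.Ioi 0) = 1 := by
    rw [← measure_union (by simp [Set.disjoint_left]) measurableSet_Ioi, Set.Iic_union_Ioi]
    simp [hμ]
  rw [h1, h2, ← two_mul] at h3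
  rw [h1, h2, ENNReal.eq_div_iff (by norm_num) (by norm_num)]
  exact h3

/-- A random variable independent of itself has {0,1}-valued preimage measures. -/
lemma self_indep_zero_one {Ω : Type*} [MeasurableSpace Ω] {P : Measure Ω}
    {W : Ω → ℝ} (h : IndepFun W W P) {s : Set ℝ} (hs : MeasurableSet s) :
    P (W ⁻¹' s) * P (W ⁻¹' s) = P (W ⁻¹' s) := by
  have := h.measure_inter_preimage_eq_mul s s hs hs
  rw [Set.inter_self] at this
  exact this.symm

/-- If `λ₁'x + λ₂z + λ₃f(e) = 0` a.s., where `z = δ'x + e`, `e ⟂ x` with `Var(e) > 0`,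
`f` strictly increasing and `f(e) ~ N(0,1)`, then either `λ₂ ≠ 0` and `λ₃ ≠ 0`,
or `λ₁ = λ₂ = λ₃ = 0`. -/
theorem stmt13 {Ω : Type*} [MeasurableSpace Ω] (P : Measure Ω) [IsProbabilityMeasure P]
    (k : ℕ) (x : Ω → Fin k → ℝ) (hx : Measurable x)
    (hxx : ∀ i j, Integrable (fun ω => x ω i * x ω j) P)
    (hSx : Matrix.PosDef (Matrix.of fun i j => ∫ ω, x ω i * x ω j ∂P))
    (e : Ω → ℝ) (he : Measurable e)
    (hindep : IndepFun e x P)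
    (heL2 : Integrable (fun ω => (e ω) ^ 2) P)
    (hemean : ∫ ω, e ω ∂P = 0)
    (hevar : 0 < ∫ ω, (e ω) ^ 2 ∂P)
    (δ : Fin k → ℝ) (z : Ω → ℝ) (hz : ∀ ω, z ω = δ ⬝ᵥ x ω + e ω)
    (f : ℝ → ℝ) (hf : StrictMono f)
    (hfe : Measure.map (fun ω => f (e ω)) P = gaussianReal 0 1)
    (l1 : Fin k → ℝ) (l2 l3 : ℝ)
    (hlin : ∀ᵐ ω ∂P, l1 ⬝ᵥ x ω + l2 * z ω + l3 * f (e ω) = 0) :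
    (l2 ≠ 0 ∧ l3 ≠ 0) ∨ (l1 = 0 ∧ l2 = 0 ∧ l3 = 0) := by
  have hdotx : ∀ c : Fin k → ℝ, Measurable fun ω => c ⬝ᵥ x ω := by
    intro c
    simp only [dotProduct]
    exact Finset.measurable_sum _ fun i _ =>
      (measurable_const.mul ((measurable_pi_apply i).comp hx))
  -- step: if l1 ⬝ᵥ x = 0 a.e. then l1 = 0
  have hl1zero : ∀ c : Fin k → ℝ, (∀ᵐ ω ∂P, c ⬝ᵥ x ω = 0) → c = 0 := by
    intro c hc
    by_contra hne
    have hpos := hSx.dotProduct_mulVec_pos hne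
    have hint : ∫ ω, (c ⬝ᵥ x ω) * (c ⬝ᵥ x ω) ∂P = 0 := by
      rw [integral_eq_zero_of_ae]
      filter_upwards [hc] with ω hω
      simp [hω]
    have hexp : ∫ ω, (c ⬝ᵥ x ω) * (c ⬝ᵥ x ω) ∂P
        = c ⬝ᵥ ((Matrix.of fun i j => ∫ ω, x ω i * x ω j ∂P) *ᵥ c) := by
      simp only [dotProduct, Matrix.mulVec, Matrix.of_apply]
      have : ∀ ω, (∑ i, c i * x ω i) * (∑ j, c j * x ω j)
          = ∑ i, ∑ j, (c i * c j) * (x ω i * x ω j) := by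
        intro ω
        rw [Finset.sum_mul_sum]
        exact Finset.sum_congr rfl fun i _ => Finset.sum_congr rfl fun j _ => by ring
      simp_rw [this]
      rw [integral_finset_sum _ fun i _ => integrable_finset_sum _
        fun j _ => (hxx i j).const_mul _]
      congr 1
      ext i
      rw [integral_finset_sum _ fun j _ => (hxx i j).const_mul _]
      simp_rw [integral_const_mul, Finset.mul_sum]
      congr 1
      ext j
      ring
    rw [hexp] at hint
    have : (0:ℝ) < c ⬝ᵥ ((Matrix.of fun i j => ∫ ω, x ω i * x ω j ∂P) *ᵥ c) := by
      simpa using hpos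
    linarith [this, hint.le, hint.ge]
  by_cases h2 : l2 = 0
  · -- show l3 = 0
    have h3 : l3 = 0 := by
      by_contra h3
      have hae : (fun ω => f (e ω)) =ᵐ[P] (fun v : Fin k → ℝ => -(l1 ⬝ᵥ v) / l3) ∘ x := by
        filter_upwards [hlin] with ω hω
        simp only [h2, zero_mul, add_zero] at hω
        show f (e ω) = -(l1 ⬝ᵥ x ω) / l3
        field_simp
        linarith [hω]
      have hmf : Measurable f := hf.monotone.measurable
      have hg : Measurable fun v : Fin k → ℝ => -(l1 ⬝ᵥ v) / l3 := by
        have : Measurable fun v : Fin k → ℝ => l1 ⬝ᵥ v := by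
          simp only [dotProduct]
          exact Finset.measurable_sum _ fun i _ => (measurable_const.mul (measurable_pi_apply i))
        exact (this.neg).div_const l3
      have hWg : IndepFun (f ∘ e) ((fun v : Fin k → ℝ => -(l1 ⬝ᵥ v) / l3) ∘ x) P :=
        hindep.comp hmf hg
      have hWW : IndepFun (fun ω => f (e ω)) (fun ω => f (e ω)) P :=
        hWg.congr (Filter.EventuallyEq.refl _ _) hae.symm
      have hp := self_indep_zero_one hWW (measurableSet_Iic (a := (0:ℝ)))
      have hmap : P ((fun ω => f (e ω)) ⁻¹' Set.Iic 0) = 1/2 := by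
        rw [show P ((fun ω => f (e ω)) ⁻¹' Set.Iic 0)
            = (Measure.map (fun ω => f (e ω)) P) (Set.Iic 0) from
          (Measure.map_apply (hmf.comp he) measurableSet_Iic).symm, hfe, gauss_half]
      rw [hmap] at hp
      have h' := congrArg ENNReal.toReal hp
      rw [ENNReal.toReal_mul] at h'
      norm_num [ENNReal.toReal_div] at h'
    -- now l3 = 0, l2 = 0, get l1 = 0
    right
    refine ⟨hl1zero l1 ?_, h2, h3⟩
    filter_upwards [hlin] with ω hω
    simpa [h2, h3] using hω
  · by_cases h3 : l3 = 0
    · -- derive contradiction: l2 must be 0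
      exfalso
      set c : Fin k → ℝ := l1 + l2 • δ with hc
      have hae : (fun ω => (l2 * e ω) * (c ⬝ᵥ x ω)) =ᵐ[P] fun ω => -(l2 * e ω)^2 := by
        filter_upwards [hlin] with ω hω
        rw [hz ω] at hω
        simp only [h3, zero_mul, add_zero] at hω
        have hcx : c ⬝ᵥ x ω = l1 ⬝ᵥ x ω + l2 * (δ ⬝ᵥ x ω) := by
          simp [hc, add_dotProduct, smul_dotProduct, smul_eq_mul, mul_assoc]
        have : c ⬝ᵥ x ω = -(l2 * e ω) := by rw [hcx]; linarith
        rw [this]; ring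
      have hXY : IndepFun (fun ω => l2 * e ω) (fun ω => c ⬝ᵥ x ω) P := by
        have := hindep.comp (measurable_id.const_mul l2) (by
          simp only [dotProduct]
          exact Finset.measurable_sum Finset.univ
            fun i _ => (measurable_const.mul (measurable_pi_apply i)) :
            Measurable fun v : Fin k → ℝ => c ⬝ᵥ v)
        exact this
      have hmul := hXY.integral_mul_eq_mul_integral ((he.const_mul l2).aestronglyMeasurable)
        ((hdotx c).aestronglyMeasurable)
      have hX0 : ∫ ω, l2 * e ω ∂P = 0 := by
        rw [integral_const_mul, hemean, mul_zero]
      have hL : integral P ((fun ω => l2 * e ω) * (fun ω => c ⬝ᵥ x ω)) = -(l2^2 * ∫ ω, (e ω)^2 ∂P) := by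
        have hpi : ((fun ω => l2 * e ω) * fun ω => c ⬝ᵥ x ω)
            = fun ω => (l2 * e ω) * (c ⬝ᵥ x ω) := rfl
        rw [hpi, integral_congr_ae hae]
        have hfun : (fun ω => -(l2 * e ω)^2) = fun ω => (-(l2^2)) * (e ω)^2 := by
          ext ω; ring
        rw [hfun, integral_const_mul]
        ring
      rw [hL, hX0, zero_mul] at hmul
      have : l2^2 * ∫ ω, (e ω)^2 ∂P = 0 := by linarith
      have := mul_eq_zero.mp this
      rcases this with h | h
      · exact h2 (pow_eq_zero_iff (by norm_num) |>.mp h)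
      · linarith
    · exact Or.inl ⟨h2, h3⟩
end
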